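/- arXiv:1712.00157 — 5 statements merged into one kernel-verified Lean document; each statement's English description precedes it below -/
import Mathlib

section
/- Let k ≥ 1, n ≥ 1 and let n output nodes be generated i.i.d. as above. Then the probability that a fixed input node is isolated (not connected to any output node) equals (1 - d̄/k)^n, and if this probability is required to be at most k^{-u} for some u > 0, then necessarily n·d̄ ≥ c·k·log k for a positive constant c depending only on u (e.g. c = u/(1 + u·log 3/3) works for k ≥ 3 and n ≥ k). -/
/-!
Averaging over the degree distribution, a fixed input node escapes one output node with
probability `1 - x`, where `x = d̄/k`, so it is isolated with probability `(1 - x)^n`.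
Since `log (1 - x) ≥ -x/(1 - x)`, the bound `(1 - x)^n ≤ k^{-u}` forces
`u log k · (1 - x) ≤ n x`. The loss `u x log k` is absorbed using `log k ≤ (log 3 / 3) n`,
which holds because `log t / t` decreases on `[e, ∞)` and `3 ≤ k ≤ n`.
-/

open Real Finset

lemma sum_mul_one_sub_div {s : Finset ℕ} {Ω : ℕ → ℝ} (hsum : ∑ d ∈ s, Ω d = 1) (k : ℝ) :
    ∑ d ∈ s, Ω d * (1 - (d : ℝ) / k) = 1 - (∑ d ∈ s, (d : ℝ) * Ω d) / k := by
  simp only [mul_sub, mul_one, sum_sub_distrib, hsum, sum_div, mul_div_assoc', mul_comm]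

lemma mul_one_sub_le_of_one_sub_pow_le_exp_neg {x a : ℝ} {n : ℕ} (hx0 : 0 ≤ x) (hx1 : x ≤ 1)
    (h : (1 - x) ^ n ≤ exp (-a)) : a * (1 - x) ≤ n * x := by
  rcases hx1.lt_or_eq with hx1 | rfl
  · have hpos : 0 < 1 - x := by linarith
    have hlog : n * log (1 - x) ≤ -a := by
      simpa [log_pow] using log_le_log (pow_pos hpos n) h
    have hlog_ge : -(x / (1 - x)) ≤ log (1 - x) := by
      have := one_sub_inv_le_log_of_pos hpos
      rwa [show 1 - (1 - x)⁻¹ = -(x / (1 - x)) by field_simp; ring] at this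
    have ha : a ≤ n * (x / (1 - x)) := by nlinarith [n.cast_nonneg (α := ℝ)]
    calc a * (1 - x) ≤ n * (x / (1 - x)) * (1 - x) := by gcongr
      _ = n * x := by field_simp
  · simp

lemma log_le_log_three_div_three_mul {t : ℝ} (ht : 3 ≤ t) : log t ≤ log 3 / 3 * t := by
  have he : exp 1 ≤ 3 := by linarith [exp_one_lt_d9]
  have := log_div_self_antitoneOn (he : 3 ∈ Set.Ici (exp 1)) (he.trans ht : t ∈ Set.Ici _) ht
  rwa [div_le_iff₀ (by linarith)] at this

/-- The probability that a fixed input node is isolated among `n` i.i.d. output nodes equals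
    `(1 - d̄/k)^n`, and if this probability is at most `k^{-u}` then
    `n·d̄ ≥ c·k·log k` with `c = u/(1 + u log 3 / 3)` (for `k ≥ 3`, `n ≥ k`). -/
theorem isolation_probability_bound (k n : ℕ) (Ω : ℕ → ℝ) (u : ℝ)
    (hk : 3 ≤ k) (hn : k ≤ n) (hu : 0 < u)
    (hΩ : ∀ d, 0 ≤ Ω d) (hsum : ∑ d ∈ Finset.range (k + 1), Ω d = 1)
    (dbar : ℝ) (hdbar : dbar = ∑ d ∈ Finset.range (k + 1), (d : ℝ) * Ω d)
    (hdbark : dbar ≤ k) :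
    (∑ d ∈ Finset.range (k + 1), Ω d * (1 - (d : ℝ) / k)) ^ n = (1 - dbar / k) ^ n ∧
    ((1 - dbar / k) ^ n ≤ (k : ℝ) ^ (-u) →
      (n : ℝ) * dbar ≥ (u / (1 + u * Real.log 3 / 3)) * k * Real.log k) := by
  refine ⟨by rw [sum_mul_one_sub_div hsum, hdbar], fun h => ?_⟩
  have hk3 : (3 : ℝ) ≤ k := by exact_mod_cast hk
  have hkpos : (0 : ℝ) < k := by linarith
  set x := dbar / k
  have hdbar_eq : dbar = x * k := (div_mul_cancel₀ dbar hkpos.ne').symm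
  have hdbar_nonneg : 0 ≤ dbar := hdbar ▸ sum_nonneg fun d _ => mul_nonneg d.cast_nonneg (hΩ d)
  have hx0 : 0 ≤ x := div_nonneg hdbar_nonneg hkpos.le
  have hx1 : x ≤ 1 := div_le_one_of_le₀ hdbark hkpos.le
  have key : u * log k * (1 - x) ≤ n * x := by
    refine mul_one_sub_le_of_one_sub_pow_le_exp_neg hx0 hx1 ?_
    rwa [rpow_def_of_pos hkpos, mul_neg, mul_comm] at h
  have hlog : log k ≤ log 3 / 3 * n :=
    (log_le_log_three_div_three_mul hk3).trans (by gcongr)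
  have hc : 0 < 1 + u * (log 3 / 3) := by positivity
  have hmain : u * log k ≤ n * x * (1 + u * (log 3 / 3)) := by
    nlinarith [mul_le_mul_of_nonneg_left hlog (mul_nonneg hu.le hx0)]
  calc u / (1 + u * log 3 / 3) * k * log k = u * log k / (1 + u * (log 3 / 3)) * k := by ring
    _ ≤ n * x * k := by gcongr; rwa [div_le_iff₀ hc]
    _ = n * dbar := by rw [hdbar_eq]; ring
end

section
/- (Lemma on odd-intersection mass.) Let 1 ≤ d ≤ k-1 and 1 ≤ s ≤ k-1. Define β = ⌈max{(k-d+1)/(2d+1), (d+1)/(2(k-d)+1)}⌉ and α = max{(k-d+1)/d, (d+1)/(k-d)}. Then Σ_{i odd, i ≤ d} C(s,i)C(k-s,d-i) ≥ (2s/(5α))·C(k,d) when s < β; ≥ (1/5)·C(k,d) when β ≤ s ≤ k-β; and ≥ (2(k-s)/(5α))·C(k,d) when s > k-β. -/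
/-!
Write `f i = C(s, i) C(k - s, d - i)`, so that `∑ f i = C(k, d)` by Vandermonde. Every even-index
term is at most `M` times the sum of its two (odd-index) neighbours: in the interior the two
neighbour ratios multiply to a product of four factors `x / (x + 1) ≥ 1 / 2`, so by AM-GM they sum
to at least `1 / 2`; at the boundary (`i = 0`, `i = d`, `i = s`, `d - i = k - s`) a single
neighbour remains, and `BoundaryDominated M` for both sides `s` and `k - s` is exactly what is
needed. Each odd term neighbours at most two even ones, hence `C(k, d) ≤ (1 + 2M) · (odd part)`.
For `β ≤ s ≤ k - β` the choice `M = 2` works by the definition of `β`; if a side `x` is below `β`,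
then `α > 2x`, and `M = 5α / (4x) - 1 / 2` works because `M x ≥ α`.
-/

open Finset

/-- `(f (p - 1) + f (p + 1)) / f p` for `f i = C(p + u, i) C(q + v, p + q - i)`. -/
noncomputable def neighbourRatio (p q u v : ℝ) : ℝ :=
  p * v / ((u + 1) * (q + 1)) + u * q / ((p + 1) * (v + 1))

lemma half_le_neighbourRatio {p q u v : ℝ} (hp : 1 ≤ p) (hq : 1 ≤ q) (hu : 1 ≤ u) (hv : 1 ≤ v) :
    1 / 2 ≤ neighbourRatio p q u v := by
  have half_le : ∀ x : ℝ, 1 ≤ x → 1 / 2 ≤ x / (x + 1) := fun x hx => by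
    rw [le_div_iff₀ (by linarith)]; linarith
  set X := p * v / ((u + 1) * (q + 1))
  set Y := u * q / ((p + 1) * (v + 1))
  have hX : 0 ≤ X := by positivity
  have hY : 0 ≤ Y := by positivity
  have hXY : X * Y = p / (p + 1) * (q / (q + 1)) * (u / (u + 1)) * (v / (v + 1)) := by
    simp only [X, Y]; field_simp
  have hprod : 1 / 16 ≤ X * Y := by
    have h1 := mul_le_mul (mul_le_mul (mul_le_mul (half_le p hp) (half_le q hq) (by norm_num)
      (by positivity)) (half_le u hu) (by norm_num) (by positivity)) (half_le v hv) (by norm_num)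
      (by positivity)
    rw [hXY]; linarith
  show 1 / 2 ≤ X + Y
  nlinarith [sq_nonneg (X - Y)]

/-- For `x + y = d + e`, the conjunction of this condition for `x` and for `y` says that each
boundary term of `i ↦ C(x, i) C(y, d - i)` is at most `M` times its only neighbour. -/
def BoundaryDominated (M d e x : ℝ) : Prop :=
  e + 1 ≤ x * (M * d + 1) ∧ d + 1 ≤ x * (M * e + 1)

lemma one_le_mul_neighbourRatio {M : ℝ} (hM : 2 ≤ M) {p q u v : ℕ}
    (ha : BoundaryDominated M (p + q) (u + v) (p + u))
    (hb : BoundaryDominated M (p + q) (u + v) (q + v)) :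
    1 ≤ M * neighbourRatio p q u v := by
  obtain ⟨ha₁, ha₂⟩ := ha
  obtain ⟨hb₁, hb₂⟩ := hb
  rcases Nat.eq_zero_or_pos p with rfl | hp
  · simp only [neighbourRatio, Nat.cast_zero, zero_add, zero_mul, zero_div, one_mul] at *
    rw [mul_div_assoc', le_div_iff₀ (by positivity)]; linarith
  rcases Nat.eq_zero_or_pos q with rfl | hq
  · simp only [neighbourRatio, Nat.cast_zero, zero_add, add_zero, mul_zero, zero_div, mul_one] at *
    rw [mul_div_assoc', le_div_iff₀ (by positivity)]; linarith
  rcases Nat.eq_zero_or_pos u with rfl | hu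
  · simp only [neighbourRatio, Nat.cast_zero, zero_add, add_zero, zero_mul, zero_div, one_mul] at *
    rw [mul_div_assoc', le_div_iff₀ (by positivity)]; linarith
  rcases Nat.eq_zero_or_pos v with rfl | hv
  · simp only [neighbourRatio, Nat.cast_zero, zero_add, add_zero, mul_zero, zero_div, mul_one] at *
    rw [mul_div_assoc', le_div_iff₀ (by positivity)]; linarith
  have := half_le_neighbourRatio (p := p) (q := q) (u := u) (v := v)
    (by exact_mod_cast hp) (by exact_mod_cast hq) (by exact_mod_cast hu) (by exact_mod_cast hv)
  nlinarith

lemma ite_choose_pred_mul_choose_succ_eq (p q u v : ℕ) :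
    (if p = 0 then 0 else ((p + u).choose (p - 1) : ℝ) * (q + v).choose (q + 1)) =
      (p + u).choose p * (q + v).choose q * (p * v / ((u + 1) * (q + 1))) := by
  rcases p with _ | p
  · simp
  have hp : ((p + 1 + u).choose (p + 1) * (p + 1) : ℝ) = (p + 1 + u).choose p * (u + 1) := by
    exact_mod_cast (Nat.choose_succ_right_eq (p + 1 + u) p).trans (by congr 1; omega)
  have hq : ((q + v).choose (q + 1) * (q + 1) : ℝ) = (q + v).choose q * v := by
    exact_mod_cast (Nat.choose_succ_right_eq (q + v) q).trans (by congr 1; omega)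
  rw [if_neg (Nat.succ_ne_zero p), Nat.add_sub_cancel]
  rw [mul_div_assoc', eq_div_iff (by positivity)]
  push_cast
  linear_combination (-(q + 1 : ℝ) * (q + v).choose (q + 1)) * hp +
    ((p + 1 + u).choose (p + 1) * (p + 1) : ℝ) * hq

lemma sum_comp_le_sum_of_injOn {ι κ : Type*} {s : Finset ι} {t : Finset κ} {f : κ → ℝ} {g : ι → κ}
    (hf : ∀ j ∈ t, 0 ≤ f j) (hg : Set.InjOn g s) (hst : Set.MapsTo g s t) :
    ∑ i ∈ s, f (g i) ≤ ∑ j ∈ t, f j := by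
  classical
  rw [← sum_image hg]
  exact sum_le_sum_of_subset_of_nonneg (image_subset_iff.2 hst) fun j hj _ => hf j hj

lemma sum_even_le_two_mul_sum_odd {f : ℕ → ℝ} (hf : ∀ i, 0 ≤ f i) {M : ℝ} (hM : 0 ≤ M) {d : ℕ}
    (h : ∀ i ≤ d, Even i →
      f i ≤ M * ((if i = 0 then 0 else f (i - 1)) + (if i = d then 0 else f (i + 1)))) :
    ∑ i ∈ range (d + 1) with Even i, f i ≤ 2 * M * ∑ i ∈ range (d + 1) with Odd i, f i := by
  set odd := ∑ i ∈ range (d + 1) with Odd i, f i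
  have hdown : ∑ i ∈ range (d + 1) with Even i, (if i = 0 then 0 else f (i - 1)) ≤ odd := by
    rw [sum_ite, sum_const_zero, zero_add, filter_filter]
    refine sum_comp_le_sum_of_injOn (fun j _ => hf j) (fun i hi j hj hij => ?_) fun i hi => ?_
    · simp only [mem_coe, mem_filter] at hi hj
      omega
    · simp only [mem_coe, mem_filter, mem_range] at hi ⊢
      obtain ⟨hid, hie, hi0⟩ := hi
      exact ⟨by omega, Nat.Even.sub_odd (by omega) hie odd_one⟩
  have hup : ∑ i ∈ range (d + 1) with Even i, (if i = d then 0 else f (i + 1)) ≤ odd := by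
    rw [sum_ite, sum_const_zero, zero_add, filter_filter]
    refine sum_comp_le_sum_of_injOn (fun j _ => hf j) (fun i _ j _ hij => ?_) fun i hi => ?_
    · simpa using hij
    · simp only [mem_coe, mem_filter, mem_range] at hi ⊢
      obtain ⟨hid, hie, hid'⟩ := hi
      exact ⟨by omega, hie.add_one⟩
  calc ∑ i ∈ range (d + 1) with Even i, f i
      ≤ ∑ i ∈ range (d + 1) with Even i,
          M * ((if i = 0 then 0 else f (i - 1)) + (if i = d then 0 else f (i + 1))) :=
        sum_le_sum fun i hi => by
          simp only [mem_filter, mem_range] at hi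
          exact h i (by omega) hi.2
    _ ≤ 2 * M * odd := by
        rw [← mul_sum, sum_add_distrib]
        nlinarith

lemma choose_mul_choose_le_mul_neighbours {M : ℝ} {p q u v : ℕ}
    (h : 1 ≤ M * neighbourRatio p q u v) :
    ((p + u).choose p : ℝ) * (q + v).choose q ≤
      M * ((if p = 0 then 0 else ((p + u).choose (p - 1) : ℝ) * (q + v).choose (q + 1)) +
        (if q = 0 then 0 else ((p + u).choose (p + 1) : ℝ) * (q + v).choose (q - 1))) := by
  have hnext : (if q = 0 then 0 else ((p + u).choose (p + 1) : ℝ) * (q + v).choose (q - 1)) =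
      (p + u).choose p * (q + v).choose q * (u * q / ((p + 1) * (v + 1))) := by
    convert ite_choose_pred_mul_choose_succ_eq q p v u using 1
    · split_ifs <;> ring
    · ring
  rw [ite_choose_pred_mul_choose_succ_eq, hnext, ← mul_add, mul_left_comm]
  exact le_mul_of_one_le_right (by positivity) h

lemma choose_le_mul_sum_odd {a b d e n : ℕ} (hab : a + b = n) (hde : d + e = n) {M : ℝ}
    (hM : 2 ≤ M) (ha : BoundaryDominated M d e a) (hb : BoundaryDominated M d e b) :
    (n.choose d : ℝ) ≤
      (1 + 2 * M) * ∑ i ∈ range (d + 1) with Odd i, (a.choose i : ℝ) * b.choose (d - i) := by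
  set f : ℕ → ℝ := fun i => (a.choose i : ℝ) * b.choose (d - i) with hf
  have hf0 : ∀ j, 0 ≤ f j := fun j => by rw [hf]; positivity
  have hvandermonde : ∑ i ∈ range (d + 1), f i = n.choose d := by
    rw [← hab, Nat.add_choose_eq, Nat.sum_antidiagonal_eq_sum_range_succ_mk]
    push_cast
    rfl
  have hterm : ∀ i ≤ d,
      f i ≤ M * ((if i = 0 then 0 else f (i - 1)) + (if i = d then 0 else f (i + 1))) := by
    intro i hi
    obtain ⟨q, rfl⟩ := Nat.exists_eq_add_of_le hi
    by_cases hsupp : i ≤ a ∧ q ≤ b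
    · obtain ⟨u, rfl⟩ := Nat.exists_eq_add_of_le hsupp.1
      obtain ⟨v, rfl⟩ := Nat.exists_eq_add_of_le hsupp.2
      obtain rfl : e = u + v := by omega
      push_cast at ha hb
      convert choose_mul_choose_le_mul_neighbours (one_le_mul_neighbourRatio hM ha hb) using 3
      · simp
      all_goals
        split_ifs <;> first | rfl | omega | (simp only [hf]; congr 3; omega)
    · have hzero : f i = 0 := by
        rcases not_and_or.mp hsupp with h | h <;>
          simp [hf, Nat.choose_eq_zero_of_lt (not_le.mp h)]
      rw [hzero]
      refine mul_nonneg (by linarith) (add_nonneg ?_ ?_) <;> split_ifs <;> simp only [le_refl, hf0]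
  have heven := sum_even_le_two_mul_sum_odd hf0 (by linarith) fun i hi _ => hterm i hi
  rw [← hvandermonde, ← sum_filter_add_sum_filter_not (range (d + 1)) Odd]
  simp only [Nat.not_odd_iff_even]
  linarith

lemma boundaryDominated_two_iff {d e x : ℝ} (hd : 0 ≤ d) (he : 0 ≤ e) :
    BoundaryDominated 2 d e x ↔ max ((e + 1) / (2 * d + 1)) ((d + 1) / (2 * e + 1)) ≤ x := by
  rw [BoundaryDominated, max_le_iff, div_le_iff₀ (by linarith), div_le_iff₀ (by linarith)]

lemma boundaryDominated_of_le_mul {M d e x α : ℝ} (hd : 0 ≤ d) (he : 0 ≤ e) (hx : 0 ≤ x)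
    (hαd : e + 1 ≤ α * d) (hαe : d + 1 ≤ α * e) (hα : α ≤ M * x) : BoundaryDominated M d e x :=
  ⟨by nlinarith, by nlinarith⟩

lemma exists_boundaryDominated_of_not_two {d e x y α : ℝ} (hd : 1 ≤ d) (he : 1 ≤ e)
    (hx : 0 < x) (hxy : x + y = d + e) (hαd : e + 1 ≤ α * d) (hαe : d + 1 ≤ α * e)
    (h : ¬ BoundaryDominated 2 d e x) :
    ∃ M, 2 ≤ M ∧ BoundaryDominated M d e x ∧ BoundaryDominated M d e y ∧
      1 + 2 * M = 5 * α / (2 * x) := by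
  have hsmall : 2 * x < α ∧ 2 * x ≤ d + e := by
    simp only [BoundaryDominated, not_and_or, not_le] at h
    rcases h with h | h <;> constructor <;> nlinarith
  set M := 5 * α / (4 * x) - 1 / 2 with hM
  have hMx : M * x = 5 * α / 4 - x / 2 := by rw [hM]; field_simp
  have hαM : α ≤ M * x := by linarith
  have hM2 : 2 ≤ M := le_of_mul_le_mul_right (by linarith) hx
  refine ⟨M, hM2, boundaryDominated_of_le_mul (by linarith) (by linarith) hx.le hαd hαe hαM,
    boundaryDominated_of_le_mul (by linarith) (by linarith) (by linarith) hαd hαe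
      (by nlinarith), ?_⟩
  rw [hM]; field_simp; ring

/-- Lower bound on the odd-intersection mass (Ahn et al.): with
    `β = ⌈max{(k-d+1)/(2d+1), (d+1)/(2(k-d)+1)}⌉` and `α = max{(k-d+1)/d, (d+1)/(k-d)}`,
    `Σ_{i odd} C(s,i)C(k-s,d-i)` is at least `(2s/(5α))C(k,d)` when `s < β`, at least
    `(1/5)C(k,d)` when `β ≤ s ≤ k-β`, and at least `(2(k-s)/(5α))C(k,d)` when `s > k-β`. -/
theorem odd_intersection_lower_bound (k d s : ℕ) (hd : 1 ≤ d) (hdk : d < k)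
    (hs : 1 ≤ s) (hsk : s < k) :
    ∀ (α : ℝ), α = max (((k : ℝ) - d + 1) / d) (((d : ℝ) + 1) / ((k : ℝ) - d)) →
    ∀ (β : ℕ), β = ⌈max ((((k : ℝ) - d + 1)) / (2 * (d : ℝ) + 1))
        (((d : ℝ) + 1) / (2 * ((k : ℝ) - d) + 1))⌉₊ →
    ((s < β →
        (∑ i ∈ (Finset.range (d + 1)).filter (fun i => Odd i),
          (s.choose i * (k - s).choose (d - i) : ℝ))
          ≥ (2 * s / (5 * α)) * (k.choose d : ℝ)) ∧
     (β ≤ s → s ≤ k - β →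
        (∑ i ∈ (Finset.range (d + 1)).filter (fun i => Odd i),
          (s.choose i * (k - s).choose (d - i) : ℝ))
          ≥ (1 / 5) * (k.choose d : ℝ)) ∧
     (k - β < s →
        (∑ i ∈ (Finset.range (d + 1)).filter (fun i => Odd i),
          (s.choose i * (k - s).choose (d - i) : ℝ))
          ≥ (2 * ((k : ℝ) - s) / (5 * α)) * (k.choose d : ℝ))) := by
  intro α hα β hβ
  have hE : ((k - d : ℕ) : ℝ) = k - d := Nat.cast_sub hdk.le
  have hB : ((k - s : ℕ) : ℝ) = k - s := Nat.cast_sub hsk.le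
  have hd1 : (1 : ℝ) ≤ d := by exact_mod_cast hd
  have hks : (0 : ℝ) < k - s := by rw [← hB]; exact_mod_cast (by omega : 0 < k - s)
  have he1 : (1 : ℝ) ≤ k - d := by rw [← hE]; exact_mod_cast (by omega : 1 ≤ k - d)
  have hαd : (k : ℝ) - d + 1 ≤ α * d := hα ▸ (div_le_iff₀ (by positivity)).1 (le_max_left _ _)
  have hαe : (d : ℝ) + 1 ≤ α * (k - d) := hα ▸ (div_le_iff₀ (by linarith)).1 (le_max_right _ _)
  have hα0 : 0 < α := by nlinarith
  have hβ_le : ∀ x : ℕ, β ≤ x ↔ BoundaryDominated 2 d (k - d) x := fun x => by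
    rw [hβ, Nat.ceil_le, boundaryDominated_two_iff (by positivity) (by linarith)]
  have hsum : ∀ M, 2 ≤ M → BoundaryDominated M d (k - d) s → BoundaryDominated M d (k - d) (k - s) →
      (k.choose d : ℝ) ≤ (1 + 2 * M) * ∑ i ∈ range (d + 1) with Odd i,
        (s.choose i : ℝ) * (k - s).choose (d - i) := fun M hM ha hb =>
    choose_le_mul_sum_odd (by omega) (by omega : d + (k - d) = k) hM (by rwa [hE])
      (by rwa [hE, hB])
  refine ⟨fun hsβ => ?_, fun hβs hsβ => ?_, fun hsβ => ?_⟩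
  · obtain ⟨M, hM, ha, hb, hM5⟩ := exists_boundaryDominated_of_not_two hd1 he1
      (x := s) (y := k - s) (by positivity) (by ring) hαd hαe ((hβ_le s).not.1 (not_le.2 hsβ))
    rw [ge_iff_le, ← inv_div, inv_mul_le_iff₀ (by positivity), ← hM5]
    exact hsum M hM ha hb
  · have := hsum 2 le_rfl ((hβ_le s).1 hβs) (hB ▸ (hβ_le (k - s)).1 (by omega))
    linarith
  · obtain ⟨M, hM, hb, ha, hM5⟩ := exists_boundaryDominated_of_not_two hd1 he1
      (x := k - s) (y := s) hks (by ring) hαd hαe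
      (hB ▸ (hβ_le (k - s)).not.1 (by omega))
    rw [ge_iff_le, ← inv_div, inv_mul_le_iff₀ (by positivity), ← hM5]
    exact hsum M hM ha hb
end

section
/- (Lemma 1, case d > k/2.) Let k ≥ 1, 1 ≤ s ≤ k/2, and k/2 < d ≤ k-1. Set κ(s) = (k-s+1)/(2s+1), α' = (d+1)/(k-d), and I_d = Σ_{i even, i ≤ d} C(s,i)C(k-s,d-i). Then I_d ≤ (1 - 2s/(5α'))·C(k,d) if d > k - κ(s), and I_d ≤ (4/5)·C(k,d) if d ≤ k - κ(s). -/
/-!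
Write `q i = C(s,i) C(k-s,d-i)` (`vandermondeTerm s (k-s) d i`), so that `∑ q i = C(k,d)` and
`I_d` is the even part of this sum; it suffices to bound the odd part `O` from below.
Consecutive terms are related by `q (i+1) (i+1) (k-s-d+i+1) = q i (s-i) (d-i)`.

If `(2s+1)(k-d) ≤ k-s` (the case `d > k - κ(s)`), the terms `C(s,j) C(k-s,k-d-j)` of
Vandermonde's sum for `C(k,k-d)` at least halve from one to the next, so `C(k,d) ≤ 2 q s`;
together with `q (s-1) (d-s+1) = q s · s (k-d)`, whichever of `q s`, `q (s-1)` is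
odd-indexed is at least `2s(k-d)/(5(d+1)) · C(k,d)`.

Otherwise every even-indexed term is at most twice the sum of its two neighbours: by the
recurrence this reduces to `PQ ≤ 2(pP + qQ)` for explicit `p, q, P, Q`, an AM-GM estimate
when `P ≤ 4p` and `Q ≤ 4q`; the boundary `i = s` is exactly where `(2s+1)(k-d) > k-s` is
needed. Summing gives `I_d ≤ 4 O`.
-/

open Finset

def vandermondeTerm (n m d i : ℕ) : ℕ := n.choose i * m.choose (d - i)

namespace vandermondeTerm

theorem sum_range (n m d : ℕ) :
    ∑ i ∈ range (d + 1), vandermondeTerm n m d i = (n + m).choose d := by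
  rw [Nat.add_choose_eq, Nat.sum_antidiagonal_eq_sum_range_succ_mk]
  rfl

theorem sum_filter_even_add_sum_filter_odd (n m d : ℕ) :
    ∑ i ∈ (range (d + 1)).filter Even, vandermondeTerm n m d i +
      ∑ i ∈ (range (d + 1)).filter Odd, vandermondeTerm n m d i = (n + m).choose d := by
  rw [← sum_range, ← sum_filter_add_sum_filter_not (range (d + 1)) Even]
  simp only [Nat.not_even_iff_odd]

theorem eq_zero_of_lt {n m d i : ℕ} (h : n < i) : vandermondeTerm n m d i = 0 := by
  simp [vandermondeTerm, Nat.choose_eq_zero_of_lt h]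

theorem succ_mul (n m : ℕ) {d i : ℕ} (hi : i < d) :
    vandermondeTerm n m d (i + 1) * ((i + 1) * (m - (d - (i + 1)))) =
      vandermondeTerm n m d i * ((n - i) * (d - i)) := by
  have hn := Nat.choose_succ_right_eq n i
  have hm := Nat.choose_succ_right_eq m (d - (i + 1))
  rw [show d - (i + 1) + 1 = d - i by omega] at hm
  calc _ = n.choose (i + 1) * (i + 1) * (m.choose (d - (i + 1)) * (m - (d - (i + 1)))) := by
        unfold vandermondeTerm; ring
    _ = n.choose i * (n - i) * (m.choose (d - i) * (d - i)) := by rw [hn, hm]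
    _ = _ := by unfold vandermondeTerm; ring

theorem two_mul_succ_le {n m d i : ℕ} (h : 2 * n * d + d ≤ m) (hi : i < d) :
    2 * vandermondeTerm n m d (i + 1) ≤ vandermondeTerm n m d i := by
  have hrec := succ_mul n m hi
  have hB : (n - i) * (d - i) ≤ n * d := Nat.mul_le_mul (Nat.sub_le _ _) (Nat.sub_le _ _)
  have hA : 2 * ((n - i) * (d - i)) < (i + 1) * (m - (d - (i + 1))) := by
    have : m - (d - (i + 1)) ≤ (i + 1) * (m - (d - (i + 1))) :=
      Nat.le_mul_of_pos_left _ (by omega)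
    have : 2 * (n * d) = 2 * n * d := by ring
    omega
  refine Nat.le_of_mul_le_mul_right ?_ (pos_of_gt hA)
  calc _ = 2 * (vandermondeTerm n m d i * ((n - i) * (d - i))) := by rw [← hrec]; ring
    _ ≤ _ := by rw [mul_left_comm]; exact Nat.mul_le_mul_left _ hA.le

end vandermondeTerm

theorem sum_range_succ_add_le_two_mul {R : Type*} [Semiring R] [PartialOrder R] [IsOrderedRing R]
    {f : ℕ → R} {r : ℕ} (h : ∀ j < r, 2 * f (j + 1) ≤ f j) :
    ∑ j ∈ range (r + 1), f j + f r ≤ 2 * f 0 := by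
  induction r with
  | zero => simp [two_mul]
  | succ r ih =>
    calc ∑ j ∈ range (r + 2), f j + f (r + 1) = ∑ j ∈ range (r + 1), f j + 2 * f (r + 1) := by
          rw [sum_range_succ, two_mul, add_assoc]
      _ ≤ ∑ j ∈ range (r + 1), f j + f r := by gcongr; exact h r (by omega)
      _ ≤ 2 * f 0 := ih fun j hj => h j (by omega)

theorem choose_add_le_two_mul_choose {n m r : ℕ} (h : 2 * n * r + r ≤ m) :
    (n + m).choose r ≤ 2 * m.choose r := by
  have hgeo := sum_range_succ_add_le_two_mul fun j (hj : j < r) =>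
    vandermondeTerm.two_mul_succ_le h hj
  rw [vandermondeTerm.sum_range] at hgeo
  simpa [vandermondeTerm] using le_of_add_le_left hgeo

theorem le_two_mul_add_of_mul_eq {x y z p q P Q : ℕ} (hx : y * p = x * Q) (hz : z * P = y * q)
    (hP : 0 < P) (hQ : 0 < Q) (h : (P ≤ 4 * p ∧ Q ≤ 4 * q) ∨ P ≤ 2 * q ∨ Q ≤ 2 * p) :
    y ≤ 2 * (x + z) := by
  have hPQ : P * Q ≤ 2 * (p * P + q * Q) := by
    rcases h with ⟨hp, hq⟩ | hq | hp
    · have := two_mul_le_add_sq P Q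
      nlinarith [Nat.mul_le_mul_right P hp, Nat.mul_le_mul_right Q hq]
    · nlinarith [Nat.mul_le_mul_right Q hq]
    · nlinarith [Nat.mul_le_mul_right P hp]
  refine Nat.le_of_mul_le_mul_right ?_ (Nat.mul_pos hP hQ)
  calc y * (P * Q) ≤ y * (2 * (p * P + q * Q)) := Nat.mul_le_mul_left _ hPQ
    _ = 2 * (y * p * P + y * q * Q) := by ring
    _ = 2 * (x + z) * (P * Q) := by rw [hx, ← hz]; ring

theorem sum_filter_even_le_four_mul_sum_filter_odd {f : ℕ → ℕ} {n : ℕ} (h0 : f 0 ≤ 2 * f 1)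
    (h : ∀ i, Odd i → f (i + 1) ≤ 2 * (f i + f (i + 2))) (hn : f (n + 1) = 0) :
    ∑ i ∈ (range (n + 1)).filter Even, f i ≤ 4 * ∑ i ∈ (range (n + 1)).filter Odd, f i := by
  set g : ℕ → ℕ := fun i => if Odd i then f i else 0
  rw [sum_filter, sum_filter, sum_range_succ']
  have hstep : ∀ i, (if Even (i + 1) then f (i + 1) else 0) ≤ 2 * g i + 2 * g (i + 2) := by
    intro i
    by_cases hi : Odd i
    · simpa [g, hi, hi.add_even even_two, Nat.even_add_one, ← mul_add] using h i hi
    · simp [g, hi, Nat.even_add_one, Nat.not_odd_iff_even.mp hi]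
  have hlow : ∑ i ∈ range n, g i ≤ ∑ i ∈ range (n + 1), g i :=
    sum_le_sum_of_subset (range_subset_range.mpr n.le_succ)
  have htail : ∑ i ∈ range (n + 2), g i = ∑ i ∈ range (n + 1), g i := by
    rw [sum_range_succ, add_eq_left]
    simp [g, hn]
  have hshift : ∑ i ∈ range (n + 2), g i = ∑ i ∈ range n, g (i + 2) + f 1 := by
    rw [sum_range_succ', sum_range_succ']
    simp [g]
  calc ∑ i ∈ range n, (if Even (i + 1) then f (i + 1) else 0) + (if Even 0 then f 0 else 0)
      ≤ ∑ i ∈ range n, (2 * g i + 2 * g (i + 2)) + f 0 := by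
        gcongr with i
        · exact hstep i
        · simp
    _ ≤ 4 * ∑ i ∈ range (n + 1), g i := by
        rw [sum_add_distrib, ← mul_sum, ← mul_sum]
        omega

namespace vandermondeTerm

theorem succ_le_two_mul_add {n m d : ℕ} (hnm : n ≤ m) (hnd : n < d)
    (h : m < (2 * n + 1) * (n + m - d)) (i : ℕ) :
    vandermondeTerm n m d (i + 1) ≤
      2 * (vandermondeTerm n m d i + vandermondeTerm n m d (i + 2)) := by
  rcases lt_or_ge n (i + 1) with hin | hin
  · simp [eq_zero_of_lt hin]
  rcases lt_or_ge m (d - (i + 1)) with hdm | hdm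
  · simp [vandermondeTerm, Nat.choose_eq_zero_of_lt hdm]
  have hprev := succ_mul n m (d := d) (i := i) (by omega)
  have hnext := succ_mul n m (d := d) (i := i + 1) (by omega)
  rw [show n - i = n - (i + 1) + 1 by omega, show d - i = d - (i + 1) + 1 by omega] at hprev
  rw [show m - (d - (i + 1 + 1)) = m - (d - (i + 1)) + 1 by omega] at hnext
  refine le_two_mul_add_of_mul_eq hprev hnext (by positivity) (by positivity) ?_
  rcases Nat.eq_zero_or_pos (n - (i + 1)) with hγ | hγ
  · right; right
    rw [hγ, show i + 1 = n by omega, show m - (d - n) = n + m - d by omega]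
    have : (2 * n + 1) * (n + m - d) = 2 * (n * (n + m - d)) + (n + m - d) := by ring
    omega
  rcases Nat.eq_zero_or_pos (m - (d - (i + 1))) with hβ | hβ
  · right; left
    rw [hβ, show d - (i + 1) = m by omega]
    nlinarith
  · have hδ : 0 < d - (i + 1) := by omega
    have hsucc_mul_succ : ∀ a b : ℕ, 0 < a → 0 < b → (a + 1) * (b + 1) ≤ 4 * (a * b) :=
      fun a b ha hb => by nlinarith
    exact Or.inl ⟨hsucc_mul_succ _ _ (by omega) hβ, hsucc_mul_succ _ _ hγ hδ⟩

theorem le_two_mul_one {n m d : ℕ} (hn : 0 < n) (hmd : m < 2 * d) :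
    vandermondeTerm n m d 0 ≤ 2 * vandermondeTerm n m d 1 := by
  rcases lt_or_ge m d with hdm | hdm
  · simp [vandermondeTerm, Nat.choose_eq_zero_of_lt hdm]
  have hrec := succ_mul n m (d := d) (i := 0) (by omega)
  have hnd : d ≤ n * d := Nat.le_mul_of_pos_left d hn
  refine Nat.le_of_mul_le_mul_right (c := m - (d - 1)) ?_ (by omega)
  calc _ ≤ vandermondeTerm n m d 0 * (2 * (n * d)) := Nat.mul_le_mul_left _ (by omega)
    _ = 2 * vandermondeTerm n m d 1 * (m - (d - 1)) := by
      simp only [zero_add, one_mul, Nat.sub_zero] at hrec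
      linarith

theorem choose_le_two_mul_self {n m d : ℕ} (hnd : n ≤ d) (h : (2 * n + 1) * (n + m - d) ≤ m) :
    (n + m).choose d ≤ 2 * vandermondeTerm n m d n := by
  rcases lt_or_ge (n + m) d with hd | hd
  · simp [Nat.choose_eq_zero_of_lt hd]
  rw [vandermondeTerm, Nat.choose_self, one_mul, ← Nat.choose_symm hd,
    ← Nat.choose_symm (show d - n ≤ m by omega), show m - (d - n) = n + m - d by omega]
  exact choose_add_le_two_mul_choose (by linarith)

theorem mul_choose_le_mul_sum_filter_odd {n m d : ℕ} (hn : 0 < n) (hnd : n ≤ d)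
    (h : (2 * n + 1) * (n + m - d) ≤ m) :
    2 * n * (n + m - d) * (n + m).choose d ≤
      5 * (d + 1) * ∑ i ∈ (range (d + 1)).filter Odd, vandermondeTerm n m d i := by
  have hC := choose_le_two_mul_self hnd h
  have hrec := succ_mul n m (d := d) (i := n - 1) (by omega)
  rw [Nat.sub_add_cancel hn, show n - (n - 1) = 1 by omega,
    show m - (d - n) = n + m - d by omega, show d - (n - 1) = d - n + 1 by omega] at hrec
  have hcoef : 4 * (n * (n + m - d)) ≤ 2 * d := by
    have : (2 * n + 1) * (n + m - d) = 2 * (n * (n + m - d)) + (n + m - d) := by ring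
    omega
  obtain ⟨j, hj, hjd, hC'⟩ : ∃ j, Odd j ∧ j ≤ d ∧
      2 * n * (n + m - d) * (n + m).choose d ≤ 5 * (d + 1) * vandermondeTerm n m d j := by
    rcases Nat.even_or_odd n with hev | hodd
    · refine ⟨n - 1, Nat.Even.sub_odd hn hev odd_one, by omega, ?_⟩
      calc 2 * n * (n + m - d) * (n + m).choose d
          ≤ 2 * n * (n + m - d) * (2 * vandermondeTerm n m d n) := Nat.mul_le_mul_left _ hC
        _ = 4 * (vandermondeTerm n m d n * (n * (n + m - d))) := by ring
        _ = 4 * (d - n + 1) * vandermondeTerm n m d (n - 1) := by rw [hrec]; ring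
        _ ≤ 5 * (d + 1) * vandermondeTerm n m d (n - 1) := Nat.mul_le_mul_right _ (by omega)
    · refine ⟨n, hodd, hnd, ?_⟩
      calc 2 * n * (n + m - d) * (n + m).choose d
          ≤ 2 * n * (n + m - d) * (2 * vandermondeTerm n m d n) := Nat.mul_le_mul_left _ hC
        _ = 4 * (n * (n + m - d)) * vandermondeTerm n m d n := by ring
        _ ≤ 5 * (d + 1) * vandermondeTerm n m d n := Nat.mul_le_mul_right _ (by omega)
  refine hC'.trans (Nat.mul_le_mul_left _ ?_)
  exact single_le_sum (fun _ _ => Nat.zero_le _) (mem_filter.mpr ⟨mem_range.mpr (by omega), hj⟩)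

end vandermondeTerm

theorem le_one_sub_div_mul {E O C a b : ℝ} (hb : 0 < b) (hEO : E + O = C)
    (h : a * C ≤ b * O) : E ≤ (1 - a / b) * C := by
  rw [sub_mul, one_mul, div_mul_eq_mul_div, le_sub_comm, div_le_iff₀ hb,
    show C - E = O by linarith]
  linarith

theorem sub_div_lt_iff_mul_sub_le {k d s : ℕ} (hdk : d ≤ k) (hsk : s ≤ k) :
    (k : ℝ) - (k - s + 1) / (2 * s + 1) < d ↔ (2 * s + 1) * (k - d) ≤ k - s := by
  rw [sub_lt_comm, lt_div_iff₀ (by positivity), ← Nat.lt_succ_iff, ← Nat.cast_lt (α := ℝ)]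
  push_cast [Nat.cast_sub hdk, Nat.cast_sub hsk]
  rw [mul_comm]

theorem even_intersection_upper_bound_large_d_general (k d s : ℕ)
    (hs : 1 ≤ s) (hsk : (s : ℝ) ≤ (k : ℝ) / 2) (hd : (k : ℝ) / 2 < (d : ℝ)) (hdk : d ≤ k - 1) :
    ∀ (κ α' Id : ℝ),
      κ = ((k : ℝ) - s + 1) / (2 * (s : ℝ) + 1) →
      α' = ((d : ℝ) + 1) / ((k : ℝ) - d) →
      Id = ∑ i ∈ (Finset.range (d + 1)).filter (fun i => Even i),
        (s.choose i * (k - s).choose (d - i) : ℝ) →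
      (((d : ℝ) > (k : ℝ) - κ → Id ≤ (1 - 2 * s / (5 * α')) * (k.choose d : ℝ)) ∧
       ((d : ℝ) ≤ (k : ℝ) - κ → Id ≤ (4 / 5) * (k.choose d : ℝ))) := by
  intro κ α' Id hκ hα hId
  have h2s : 2 * s ≤ k := by exact_mod_cast (by push_cast; linarith : ((2 * s : ℕ) : ℝ) ≤ k)
  have h2d : k < 2 * d := by exact_mod_cast (by push_cast; linarith : (k : ℝ) < ((2 * d : ℕ) : ℝ))
  have hk : s + (k - s) = k := by omega
  set E := ∑ i ∈ (range (d + 1)).filter Even, vandermondeTerm s (k - s) d i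
  set O := ∑ i ∈ (range (d + 1)).filter Odd, vandermondeTerm s (k - s) d i
  have hIdE : Id = E := by rw [hId]; simp [E, vandermondeTerm]
  have hEO : (E : ℝ) + O = k.choose d := by
    exact_mod_cast hk ▸ vandermondeTerm.sum_filter_even_add_sum_filter_odd s (k - s) d
  rw [hIdE, hκ]
  have hkd : (0 : ℝ) < k - d := sub_pos.mpr (by exact_mod_cast (by omega : d < k))
  constructor
  · intro hcase
    rw [gt_iff_lt, sub_div_lt_iff_mul_sub_le (by omega) (by omega), ← hk, Nat.add_sub_cancel_left] at hcase
    have hO := vandermondeTerm.mul_choose_le_mul_sum_filter_odd hs (by omega) hcase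
    rw [hk] at hO
    have hOR : 2 * (s : ℝ) * (k - d) * k.choose d ≤ 5 * (d + 1) * O := by
      rw [← Nat.cast_sub (by omega : d ≤ k)]
      exact_mod_cast hO
    have hcoef : 2 * s / (5 * α') = 2 * s * (k - d) / (5 * (d + 1)) := by
      rw [hα]
      field_simp
    rw [hcoef]
    exact le_one_sub_div_mul (by positivity) hEO hOR
  · intro hcase
    rw [← not_lt, sub_div_lt_iff_mul_sub_le (by omega) (by omega), not_le, ← hk,
      Nat.add_sub_cancel_left] at hcase
    have hEO4 : (E : ℝ) ≤ 4 * O := by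
      exact_mod_cast sum_filter_even_le_four_mul_sum_filter_odd
        (vandermondeTerm.le_two_mul_one hs (by omega))
        (fun i _ => vandermondeTerm.succ_le_two_mul_add (by omega) (by omega) hcase i)
        (vandermondeTerm.eq_zero_of_lt (show s < d + 1 by omega))
    linarith

/-- Lemma 1, case `d > k/2`: with `κ(s) = (k-s+1)/(2s+1)` and `α' = (d+1)/(k-d)`, the even
    part `I_d = Σ_{i even} C(s,i)C(k-s,d-i)` satisfies `I_d ≤ (1 - 2s/(5α'))C(k,d)` if
    `d > k - κ(s)`, and `I_d ≤ (4/5)C(k,d)` if `d ≤ k - κ(s)`. -/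
theorem even_intersection_upper_bound_large_d (k d s : ℕ) (hk : 1 ≤ k)
    (hs : 1 ≤ s) (hsk : (s : ℝ) ≤ (k : ℝ) / 2) (hd : (k : ℝ) / 2 < (d : ℝ)) (hdk : d ≤ k - 1) :
    ∀ (κ α' Id : ℝ),
      κ = ((k : ℝ) - s + 1) / (2 * (s : ℝ) + 1) →
      α' = ((d : ℝ) + 1) / ((k : ℝ) - d) →
      Id = ∑ i ∈ (Finset.range (d + 1)).filter (fun i => Even i),
        (s.choose i * (k - s).choose (d - i) : ℝ) →
      (((d : ℝ) > (k : ℝ) - κ → Id ≤ (1 - 2 * s / (5 * α')) * (k.choose d : ℝ)) ∧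
       ((d : ℝ) ≤ (k : ℝ) - κ → Id ≤ (4 / 5) * (k.choose d : ℝ))) :=
  even_intersection_upper_bound_large_d_general k d s hs hsk hd hdk
end

section
/- (Lemma 2, case ⌈κ(s)⌉ > D.) Let k ≥ 3, D ∈ {2,…,k}, and let Ω be the truncated Soliton distribution with mean d̄. Let 1 ≤ s ≤ k/2 with ⌈κ(s)⌉ > D, and set Σ_s ≥ (2s/5)·Σ_{d=1}^{⌈κ(s)⌉-1} d·Ω_d/(k-d+1). Then Σ_s > 2s·d̄/(5k), and consequently if n·d̄ ≥ 5k·log k then C(k,s)·e^{-n·Σ_s} < k^{-s}. -/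
/-!
The weights of the truncated Soliton distribution satisfy `d Ω_d = 1/(d-1)` for `2 ≤ d ≤ D`, so
`∑_{d ≤ D} d Ω_d = 1/D + H_{D-1} = d̄`. Since `Ω` vanishes beyond `D ≤ ⌈κ⌉ - 1`, the sum bounding
`Σ_s` is `∑_{d ≤ D} d Ω_d / (k - d + 1)`, and every denominator is at most `k`, strictly so at
`d = 2`; hence `Σ_s > 2s d̄/(5k)`. If `n d̄ ≥ 5k log k` this gives `n Σ_s > 2s log k`, and with
`C(k,s) ≤ k^s` the union bound `C(k,s) e^{-n Σ_s} < k^{-s}` follows.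
-/

open Finset

noncomputable def solitonTrunc (D d : ℕ) : ℝ :=
  if d = 1 then 1 / (D : ℝ) else if 2 ≤ d ∧ d ≤ D then 1 / ((d : ℝ) * ((d : ℝ) - 1)) else 0

theorem solitonTrunc_nonneg (D d : ℕ) : 0 ≤ solitonTrunc D d := by
  unfold solitonTrunc
  split_ifs with _ h
  · positivity
  · have hd : (2 : ℝ) ≤ d := by exact_mod_cast h.1
    have : 0 < (d : ℝ) * ((d : ℝ) - 1) := by nlinarith
    positivity
  · rfl

theorem solitonTrunc_eq_zero_of_lt {D d : ℕ} (hD : 1 ≤ D) (h : D < d) : solitonTrunc D d = 0 := by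
  rw [solitonTrunc, if_neg (by omega), if_neg (by omega)]

theorem mul_solitonTrunc_of_two_le {D d : ℕ} (hd : 2 ≤ d) (hdD : d ≤ D) :
    (d : ℝ) * solitonTrunc D d = 1 / ((d : ℝ) - 1) := by
  have hd' : (2 : ℝ) ≤ d := by exact_mod_cast hd
  rw [solitonTrunc, if_neg (by omega), if_pos ⟨hd, hdD⟩]
  field_simp [show (d : ℝ) - 1 ≠ 0 by linarith]

theorem sum_mul_solitonTrunc (D : ℕ) :
    ∑ d ∈ Icc 1 D, (d : ℝ) * solitonTrunc D d = ∑ d ∈ Icc 1 D, 1 / (d : ℝ) := by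
  rcases D with _ | m
  · simp
  rw [← sum_Ioc_add_eq_sum_Icc (by omega), sum_Icc_succ_top (by omega), ← Icc_add_one_left_eq_Ioc,
    ← map_add_right_Icc 1 m 1, sum_map]
  have hshift : ∀ d ∈ Icc 1 m, ((d + 1 : ℕ) : ℝ) * solitonTrunc (m + 1) (d + 1) = 1 / d := by
    intro d hd
    rw [mem_Icc] at hd
    rw [mul_solitonTrunc_of_two_le (by omega) (by omega)]
    push_cast; ring_nf
  simp only [addRightEmbedding_apply]
  rw [sum_congr rfl hshift, solitonTrunc, if_pos rfl]
  push_cast; ring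

theorem sum_Icc_mul_solitonTrunc_div_of_le {D M : ℕ} (hD : 1 ≤ D) (hDM : D ≤ M) (g : ℕ → ℝ) :
    ∑ d ∈ Icc 1 M, (d : ℝ) * solitonTrunc D d / g d
      = ∑ d ∈ Icc 1 D, (d : ℝ) * solitonTrunc D d / g d := by
  refine (sum_subset (Icc_subset_Icc_right hDM) fun d hdM hdD => ?_).symm
  rw [mem_Icc] at hdM hdD
  rw [solitonTrunc_eq_zero_of_lt hD (by omega), mul_zero, zero_div]

theorem sum_div_lt_sum_div_sub_add_one {D k : ℕ} (hD : 2 ≤ D) (hDk : D ≤ k) {w : ℕ → ℝ}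
    (hw : ∀ d, 0 ≤ w d) (hw2 : 0 < w 2) :
    (∑ d ∈ Icc 1 D, w d) / k < ∑ d ∈ Icc 1 D, w d / ((k : ℝ) - d + 1) := by
  have hk : (2 : ℝ) ≤ k := by exact_mod_cast hD.trans hDk
  rw [sum_div]
  refine sum_lt_sum (fun d hd => ?_) ⟨2, mem_Icc.2 ⟨by norm_num, hD⟩, ?_⟩
  · rw [mem_Icc] at hd
    have hd1 : (1 : ℝ) ≤ d := by exact_mod_cast hd.1
    have hdk : (d : ℝ) ≤ k := by exact_mod_cast hd.2.trans hDk
    exact div_le_div_of_nonneg_left (hw d) (by linarith) (by linarith)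
  · exact div_lt_div_of_pos_left hw2 (by push_cast; linarith) (by push_cast; linarith)

theorem sum_inv_div_lt_sum_mul_solitonTrunc {D k M : ℕ} (hD : 2 ≤ D) (hDk : D ≤ k) (hDM : D ≤ M) :
    (∑ d ∈ Icc 1 D, 1 / (d : ℝ)) / k
      < ∑ d ∈ Icc 1 M, (d : ℝ) * solitonTrunc D d / ((k : ℝ) - d + 1) := by
  rw [sum_Icc_mul_solitonTrunc_div_of_le (by omega) hDM, ← sum_mul_solitonTrunc]
  refine sum_div_lt_sum_div_sub_add_one hD hDk (fun d => ?_) ?_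
  · exact mul_nonneg d.cast_nonneg (solitonTrunc_nonneg D d)
  · rw [mul_solitonTrunc_of_two_le le_rfl hD]
    norm_num

theorem two_mul_log_lt_mul {k s n : ℕ} (hk : 1 < k) {dbar S : ℝ}
    (hS : 2 * s * dbar / (5 * k) < S) (hn : 5 * k * Real.log k ≤ n * dbar) :
    2 * s * Real.log k < n * S := by
  have hk0 : (0 : ℝ) < k := by positivity
  have hlog : 0 < Real.log k := Real.log_pos (by exact_mod_cast hk)
  have hn0 : (0 : ℝ) < n := by
    rcases n.eq_zero_or_pos with rfl | hn0
    · simp at hn; nlinarith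
    · exact_mod_cast hn0
  calc 2 * s * Real.log k = 2 * s / (5 * k) * (5 * k * Real.log k) := by field_simp
    _ ≤ 2 * s / (5 * k) * (n * dbar) := by gcongr
    _ = n * (2 * s * dbar / (5 * k)) := by ring
    _ < n * S := by gcongr

theorem choose_mul_exp_neg_lt_rpow_neg {k : ℕ} (hk : 1 < k) (s : ℕ) {x : ℝ}
    (hx : 2 * s * Real.log k < x) :
    (k.choose s : ℝ) * Real.exp (-x) < (k : ℝ) ^ (-(s : ℝ)) := by
  have hk0 : (0 : ℝ) < k := by positivity
  have hchoose : (k.choose s : ℝ) ≤ (k : ℝ) ^ s := by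
    exact_mod_cast (Nat.choose_le_descFactorial k s).trans (Nat.descFactorial_le_pow k s)
  have hexp : Real.exp (-x) < (k : ℝ) ^ (-(2 * s : ℝ)) := by
    rw [Real.rpow_def_of_pos hk0, Real.exp_lt_exp]
    linarith
  calc (k.choose s : ℝ) * Real.exp (-x) ≤ (k : ℝ) ^ s * Real.exp (-x) := by gcongr
    _ < (k : ℝ) ^ s * (k : ℝ) ^ (-(2 * s : ℝ)) := by gcongr
    _ = (k : ℝ) ^ (-(s : ℝ)) := by
      rw [← Real.rpow_natCast, ← Real.rpow_add hk0]
      ring_nf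

theorem sigma_bound_large_kappa_general (k D s n : ℕ) (hD2 : 2 ≤ D) (hDk : D ≤ k)
    (hs : 1 ≤ s)
    (Ω : ℕ → ℝ)
    (hΩ : ∀ d, Ω d = if d = 1 then 1 / (D : ℝ)
      else if 2 ≤ d ∧ d ≤ D then 1 / ((d : ℝ) * ((d : ℝ) - 1)) else 0)
    (dbar : ℝ) (hdbar : dbar = ∑ d ∈ Finset.Icc 1 D, (1 : ℝ) / d)
    (κ : ℝ)
    (hκD : D < ⌈κ⌉₊)
    (Ss : ℝ)
    (hSs : Ss ≥ (2 * (s : ℝ) / 5) *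
      ∑ d ∈ Finset.Icc 1 (⌈κ⌉₊ - 1), (d : ℝ) * Ω d / ((k : ℝ) - d + 1)) :
    Ss > 2 * (s : ℝ) * dbar / (5 * k) ∧
    ((n : ℝ) * dbar ≥ 5 * (k : ℝ) * Real.log k →
      (k.choose s : ℝ) * Real.exp (-(n : ℝ) * Ss) < (k : ℝ) ^ (-(s : ℝ))) := by
  obtain rfl : Ω = solitonTrunc D := funext hΩ
  have hk : 1 < k := by omega
  have hsum := sum_inv_div_lt_sum_mul_solitonTrunc hD2 hDk (M := ⌈κ⌉₊ - 1) (by omega)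
  rw [← hdbar] at hsum
  have hs0 : (0 : ℝ) < 2 * s / 5 := by positivity
  have hSs_gt : 2 * (s : ℝ) * dbar / (5 * k) < Ss :=
    calc 2 * (s : ℝ) * dbar / (5 * k) = 2 * s / 5 * (dbar / k) := by ring
      _ < _ := mul_lt_mul_of_pos_left hsum hs0
      _ ≤ Ss := hSs
  refine ⟨hSs_gt, fun hn => ?_⟩
  rw [neg_mul]
  exact choose_mul_exp_neg_lt_rpow_neg hk s (two_mul_log_lt_mul hk hSs_gt hn)

/-- Lemma 2, case `⌈κ(s)⌉ > D`: under the truncated Soliton distribution,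
    `Σ_s > 2s·d̄/(5k)`, and if `n·d̄ ≥ 5k log k` then `C(k,s)e^{-nΣ_s} < k^{-s}`. -/
theorem sigma_bound_large_kappa (k D s n : ℕ) (hk : 3 ≤ k) (hD2 : 2 ≤ D) (hDk : D ≤ k)
    (hs : 1 ≤ s) (hsk : (s : ℝ) ≤ (k : ℝ) / 2)
    (Ω : ℕ → ℝ)
    (hΩ : ∀ d, Ω d = if d = 1 then 1 / (D : ℝ)
      else if 2 ≤ d ∧ d ≤ D then 1 / ((d : ℝ) * ((d : ℝ) - 1)) else 0)
    (dbar : ℝ) (hdbar : dbar = ∑ d ∈ Finset.Icc 1 D, (1 : ℝ) / d)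
    (κ : ℝ) (hκ : κ = ((k : ℝ) - s + 1) / (2 * (s : ℝ) + 1))
    (hκD : D < ⌈κ⌉₊)
    (Ss : ℝ)
    (hSs : Ss ≥ (2 * (s : ℝ) / 5) *
      ∑ d ∈ Finset.Icc 1 (⌈κ⌉₊ - 1), (d : ℝ) * Ω d / ((k : ℝ) - d + 1)) :
    Ss > 2 * (s : ℝ) * dbar / (5 * k) ∧
    ((n : ℝ) * dbar ≥ 5 * (k : ℝ) * Real.log k →
      (k.choose s : ℝ) * Real.exp (-(n : ℝ) * Ss) < (k : ℝ) ^ (-(s : ℝ))) :=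
  sigma_bound_large_kappa_general k D s n hD2 hDk hs Ω hΩ dbar hdbar κ hκD Ss hSs
end

section
/- (Lemma 2, case 4 ≤ ⌈κ(s)⌉ ≤ D.) Under the truncated Soliton distribution, if 4 ≤ ⌈κ(s)⌉ ≤ D then Σ_s ≥ (2s/(5k))·log(4k/(21s)), where Σ_s = (2s/5)·Σ_{d=1}^{⌈κ(s)⌉-1} d·Ω_d/(k-d+1) (plus nonnegative terms). Consequently, if n ≥ 68k then C(k,s)·e^{-n·Σ_s} ≤ (k/s)^{-2s}. -/
/-! For `2 ≤ d < ⌈κ⌉` the Soliton term `d Ω_d / (k - d + 1)` equals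
`1 / ((d - 1)(k - d + 1))`, which is at least `1 / ((d - 1) k)`; summing gives a harmonic
number, so the sum is at least `log (⌈κ⌉ - 1) / k ≥ log (4k / (21s)) / k`, because `⌈κ⌉ ≥ 4`
forces `k > 7s + 2`.
For `n ≥ 68k` this yields `n Σ_s ≥ (136/5) s log (4k / (21s)) ≥ 4s log (k/s)`
(using `k/s ≥ 7`), while `C(k,s) ≤ (e k / s)^s ≤ (k/s)^{2s}`. -/

open Real Finset

noncomputable def kappa (k s : ℝ) : ℝ := (k - s + 1) / (2 * s + 1)

lemma seven_mul_add_two_lt_of_three_lt_kappa {k s : ℝ} (hs : 0 ≤ s) (h : 3 < kappa k s) :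
    7 * s + 2 < k := by
  rw [kappa, lt_div_iff₀ (by linarith)] at h
  linarith

lemma four_mul_div_le_kappa_sub_one {k s : ℝ} (hs : 1 ≤ s) (h : 3 < kappa k s) :
    4 * k / (21 * s) ≤ kappa k s - 1 := by
  have hk := seven_mul_add_two_lt_of_three_lt_kappa (by linarith) h
  have hsub : kappa k s - 1 = (k - 3 * s) / (2 * s + 1) := by
    rw [kappa]; field_simp; ring
  rw [hsub, div_le_div_iff₀ (by positivity) (by linarith)]
  nlinarith [mul_le_mul_of_nonneg_left hk.le (by linarith : (0 : ℝ) ≤ 13 * s - 4)]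

noncomputable def solitonDist (D d : ℕ) : ℝ :=
  if d = 1 then 1 / (D : ℝ)
  else if 2 ≤ d ∧ d ≤ D then 1 / ((d : ℝ) * ((d : ℝ) - 1)) else 0

lemma solitonDist_nonneg (D d : ℕ) : 0 ≤ solitonDist D d := by
  unfold solitonDist
  split_ifs with _ hd
  · positivity
  · have : (1 : ℝ) ≤ d - 1 := by
      have : (2 : ℝ) ≤ d := by exact_mod_cast hd.1
      linarith
    positivity
  · exact le_rfl

lemma solitonDist_of_two_le {D d : ℕ} (hd : 2 ≤ d) (hdD : d ≤ D) :
    solitonDist D d = 1 / ((d : ℝ) * ((d : ℝ) - 1)) := by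
  rw [solitonDist, if_neg (by omega), if_pos ⟨hd, hdD⟩]

lemma one_div_sub_one_mul_le_solitonDist_term {D k d : ℕ} (hd : 2 ≤ d) (hdD : d ≤ D)
    (hdk : d ≤ k) :
    1 / (((d : ℝ) - 1) * k) ≤ d * solitonDist D d / ((k : ℝ) - d + 1) := by
  have hd' : (2 : ℝ) ≤ d := by exact_mod_cast hd
  have hdk' : (d : ℝ) ≤ k := by exact_mod_cast hdk
  have hterm : (d : ℝ) * solitonDist D d / ((k : ℝ) - d + 1)
      = 1 / (((d : ℝ) - 1) * ((k : ℝ) - d + 1)) := by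
    rw [solitonDist_of_two_le hd hdD]
    field_simp [show (d : ℝ) - 1 ≠ 0 by linarith, show (k : ℝ) - d + 1 ≠ 0 by linarith]
  have hd1 : 0 < (d : ℝ) - 1 := by linarith
  rw [hterm]
  gcongr
  linarith

lemma log_le_sum_Icc_two_one_div_sub_one (m : ℕ) :
    log m ≤ ∑ d ∈ Icc 2 m, 1 / ((d : ℝ) - 1) := by
  cases m with
  | zero => simp
  | succ n =>
    have hshift :
        ∑ d ∈ Icc 2 (n + 1), 1 / ((d : ℝ) - 1) = ∑ i ∈ Icc 1 n, 1 / (i : ℝ) := by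
      rw [show (2 : ℕ) = 1 + 1 from rfl, ← map_add_right_Icc, sum_map]
      simp
    have h := log_add_one_le_harmonic n
    rw [harmonic_eq_sum_Icc] at h
    push_cast at h
    rw [hshift]
    simpa using h

lemma log_div_le_sum_solitonDist_terms {D k m : ℕ} (hmD : m ≤ D) (hmk : m ≤ k) :
    log m / k ≤ ∑ d ∈ Icc 1 m, d * solitonDist D d / ((k : ℝ) - d + 1) := by
  have hterm_nonneg : ∀ d ∈ Icc 1 m, 0 ≤ d * solitonDist D d / ((k : ℝ) - d + 1) := by
    intro d hd
    have : (d : ℝ) ≤ k := by exact_mod_cast (mem_Icc.mp hd).2.trans hmk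
    have := solitonDist_nonneg D d
    have : (0 : ℝ) < k - d + 1 := by linarith
    positivity
  calc log m / k ≤ (∑ d ∈ Icc 2 m, 1 / ((d : ℝ) - 1)) / k := by
        gcongr; exact log_le_sum_Icc_two_one_div_sub_one m
    _ = ∑ d ∈ Icc 2 m, 1 / (((d : ℝ) - 1) * k) := by
        rw [sum_div]; simp only [div_div]
    _ ≤ ∑ d ∈ Icc 2 m, d * solitonDist D d / ((k : ℝ) - d + 1) := by
        refine sum_le_sum fun d hd => ?_
        obtain ⟨hd2, hdm⟩ := mem_Icc.mp hd
        exact one_div_sub_one_mul_le_solitonDist_term hd2 (hdm.trans hmD) (hdm.trans hmk)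
    _ ≤ ∑ d ∈ Icc 1 m, d * solitonDist D d / ((k : ℝ) - d + 1) :=
        sum_le_sum_of_subset_of_nonneg (Icc_subset_Icc_left one_le_two)
          fun d hd _ => hterm_nonneg d hd

lemma five_mul_log_le_of_seven_le {x : ℝ} (hx : 7 ≤ x) :
    5 * log x ≤ 34 * log (4 * x / 21) := by
  have hnum : 34 * log (21 / 4) ≤ 29 * log 7 := by
    have h : ((21 : ℝ) / 4) ^ 34 ≤ 7 ^ 29 := by norm_num
    have := log_le_log (by positivity) h
    rwa [log_pow, log_pow, Nat.cast_ofNat, Nat.cast_ofNat] at this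
  have h7 : log 7 ≤ log x := log_le_log (by norm_num) hx
  have hsplit : log (4 * x / 21) = log x - log (21 / 4) := by
    rw [← log_div (by linarith) (by norm_num)]
    ring_nf
  rw [hsplit]
  linarith

lemma four_mul_log_le_of_seven_le_div {k s : ℝ} (hs : 0 < s) (hX : 7 ≤ k / s) :
    4 * s * log (k / s) ≤ 68 * k * (2 * s / (5 * k) * log (4 * k / (21 * s))) := by
  have hk : k ≠ 0 := by
    rintro rfl
    norm_num at hX
  calc 4 * s * log (k / s) = 4 / 5 * s * (5 * log (k / s)) := by ring
    _ ≤ 4 / 5 * s * (34 * log (4 * (k / s) / 21)) :=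
        mul_le_mul_of_nonneg_left (five_mul_log_le_of_seven_le hX) (by positivity)
    _ = 68 * k * (2 * s / (5 * k) * log (4 * k / (21 * s))) := by
        rw [show 4 * (k / s) / 21 = 4 * k / (21 * s) by ring]
        field_simp
        ring

lemma choose_le_exp_two_mul_log {k s : ℕ} (h : exp 1 ≤ (k : ℝ) / s) :
    (k.choose s : ℝ) ≤ exp (2 * s * log ((k : ℝ) / s)) := by
  set X : ℝ := (k : ℝ) / s
  have hX : 0 < X := (exp_pos 1).trans_le h
  have hs : (s : ℝ) ≠ 0 := by
    rintro hs
    simp [X, hs] at hX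
  have hfact : (s : ℝ) ^ s / s.factorial ≤ X ^ s := by
    calc (s : ℝ) ^ s / s.factorial ≤ exp s := pow_div_factorial_le_exp _ (Nat.cast_nonneg s) s
      _ = exp 1 ^ s := by rw [← exp_nat_mul, mul_one]
      _ ≤ X ^ s := by gcongr
  calc (k.choose s : ℝ) ≤ (k : ℝ) ^ s / s.factorial := Nat.choose_le_pow_div s k
    _ = X ^ s * ((s : ℝ) ^ s / s.factorial) := by
        simp only [X, div_pow]; field_simp
    _ ≤ X ^ s * X ^ s := by gcongr
    _ = exp (2 * s * log X) := by
        rw [← pow_add, ← exp_log hX, ← exp_nat_mul, log_exp]; push_cast; ring_nf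

lemma choose_mul_exp_neg_le_rpow {k s : ℕ} {t : ℝ} (hX : 3 ≤ (k : ℝ) / s)
    (ht : 4 * s * log ((k : ℝ) / s) ≤ t) :
    (k.choose s : ℝ) * exp (-t) ≤ ((k : ℝ) / s) ^ (-(2 * (s : ℝ))) := by
  calc (k.choose s : ℝ) * exp (-t)
      ≤ exp (2 * s * log ((k : ℝ) / s)) * exp (-(4 * s * log ((k : ℝ) / s))) := by
        gcongr
        exact choose_le_exp_two_mul_log (by linarith [exp_one_lt_d9])
    _ = ((k : ℝ) / s) ^ (-(2 * (s : ℝ))) := by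
        rw [← exp_add, rpow_def_of_pos (by linarith)]; ring_nf

theorem sigma_bound_mid_kappa_general (k D s n : ℕ) (hDk : D ≤ k)
    (hs : 1 ≤ s)
    (Ω : ℕ → ℝ)
    (hΩ : ∀ d, Ω d = if d = 1 then 1 / (D : ℝ)
      else if 2 ≤ d ∧ d ≤ D then 1 / ((d : ℝ) * ((d : ℝ) - 1)) else 0)
    (κ : ℝ) (hκ : κ = ((k : ℝ) - s + 1) / (2 * (s : ℝ) + 1))
    (hκ4 : 4 ≤ ⌈κ⌉₊) (hκD : ⌈κ⌉₊ ≤ D)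
    (Ss : ℝ)
    (hSs : Ss ≥ (2 * (s : ℝ) / 5) *
      ∑ d ∈ Finset.Icc 1 (⌈κ⌉₊ - 1), (d : ℝ) * Ω d / ((k : ℝ) - d + 1)) :
    Ss ≥ (2 * (s : ℝ) / (5 * (k : ℝ))) * Real.log (4 * (k : ℝ) / (21 * (s : ℝ))) ∧
    ((n : ℝ) ≥ 68 * (k : ℝ) →
      (k.choose s : ℝ) * Real.exp (-(n : ℝ) * Ss)
        ≤ ((k : ℝ) / (s : ℝ)) ^ (-(2 * (s : ℝ)))) := by
  obtain rfl : Ω = solitonDist D := funext hΩ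
  obtain rfl : κ = kappa k s := hκ
  have hs' : (1 : ℝ) ≤ s := by exact_mod_cast hs
  have hκ3 : 3 < kappa k s := Nat.lt_ceil.mp hκ4
  have hk : 7 * (s : ℝ) ≤ k := by
    linarith [seven_mul_add_two_lt_of_three_lt_kappa (by positivity) hκ3]
  have hX : 7 ≤ (k : ℝ) / s := by
    rw [le_div_iff₀ (by positivity)]; linarith
  have hq : 1 ≤ 4 * (k : ℝ) / (21 * s) := by
    rw [le_div_iff₀ (by positivity)]; linarith
  have hlog : log (4 * (k : ℝ) / (21 * s)) ≤ log ((⌈kappa k s⌉₊ - 1 : ℕ) : ℝ) := by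
    refine log_le_log (by linarith) ?_
    rw [Nat.cast_sub (by omega), Nat.cast_one]
    linarith [four_mul_div_le_kappa_sub_one hs' hκ3, Nat.le_ceil (kappa k s)]
  have hfirst : Ss ≥ 2 * s / (5 * k) * log (4 * (k : ℝ) / (21 * s)) := by
    calc 2 * s / (5 * k) * log (4 * (k : ℝ) / (21 * s))
        = 2 * s / 5 * (log (4 * (k : ℝ) / (21 * s)) / k) := by ring
      _ ≤ 2 * s / 5 * (log ((⌈kappa k s⌉₊ - 1 : ℕ) : ℝ) / k) := by gcongr
      _ ≤ Ss := hSs.trans' <| by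
          gcongr; exact log_div_le_sum_solitonDist_terms (by omega) (by omega)
  refine ⟨hfirst, fun hn => ?_⟩
  have hnSs : 4 * s * log ((k : ℝ) / s) ≤ n * Ss := by
    calc 4 * s * log ((k : ℝ) / s)
        ≤ 68 * k * (2 * s / (5 * k) * log (4 * (k : ℝ) / (21 * s))) :=
          four_mul_log_le_of_seven_le_div (by positivity) hX
      _ ≤ 68 * k * Ss := by gcongr
      _ ≤ n * Ss := by gcongr; exact (mul_nonneg (by positivity) (log_nonneg hq)).trans hfirst
  rw [neg_mul]
  exact choose_mul_exp_neg_le_rpow (by linarith) hnSs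

/-- Lemma 2, case `4 ≤ ⌈κ(s)⌉ ≤ D`: under the truncated Soliton distribution,
    `Σ_s ≥ (2s/(5k)) log(4k/(21s))`, and if `n ≥ 68k` then
    `C(k,s)e^{-nΣ_s} ≤ (k/s)^{-2s}`. -/
theorem sigma_bound_mid_kappa (k D s n : ℕ) (hk : 3 ≤ k) (hD2 : 2 ≤ D) (hDk : D ≤ k)
    (hs : 1 ≤ s) (hsk : (s : ℝ) ≤ (k : ℝ) / 2)
    (Ω : ℕ → ℝ)
    (hΩ : ∀ d, Ω d = if d = 1 then 1 / (D : ℝ)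
      else if 2 ≤ d ∧ d ≤ D then 1 / ((d : ℝ) * ((d : ℝ) - 1)) else 0)
    (κ : ℝ) (hκ : κ = ((k : ℝ) - s + 1) / (2 * (s : ℝ) + 1))
    (hκ4 : 4 ≤ ⌈κ⌉₊) (hκD : ⌈κ⌉₊ ≤ D)
    (Ss : ℝ)
    (hSs : Ss ≥ (2 * (s : ℝ) / 5) *
      ∑ d ∈ Finset.Icc 1 (⌈κ⌉₊ - 1), (d : ℝ) * Ω d / ((k : ℝ) - d + 1)) :
    Ss ≥ (2 * (s : ℝ) / (5 * (k : ℝ))) * Real.log (4 * (k : ℝ) / (21 * (s : ℝ))) ∧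
    ((n : ℝ) ≥ 68 * (k : ℝ) →
      (k.choose s : ℝ) * Real.exp (-(n : ℝ) * Ss)
        ≤ ((k : ℝ) / (s : ℝ)) ^ (-(2 * (s : ℝ)))) :=
  sigma_bound_mid_kappa_general k D s n hDk hs Ω hΩ κ hκ hκ4 hκD Ss hSs
end
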